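/- arXiv:1404.0223 — 4 statements merged into one kernel-verified Lean document; each statement's English description precedes it below -/
import Mathlib

section
/- If f satisfies the spherically symmetric CMC ODE, then the quantities γ = f'/√(1-(f')²) and η = f·√(1-(f')²) satisfy η·γ' = (d+1)·η − d and η' = f'·√(1-(f')²)·(d+1)·(1 − η), wherever |f'| < 1. -/
/-! In terms of `s = √(1 - (f')²)` one has `γ' = f'' / s³` and `η' = f' s - f f' f'' / s`.
Substituting `f f'' = (d+1) f s³ - d s²` from the ODE turns both into the claimed identities. -/

open Real

section SqrtOneSubSq

variable {u : ℝ → ℝ} {u' t : ℝ}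

theorem HasDerivAt.sqrt_one_sub_sq (hu : HasDerivAt u u' t) (ht : u t ^ 2 < 1) :
    HasDerivAt (fun x => √(1 - u x ^ 2)) (-(u t * u') / √(1 - u t ^ 2)) t := by
  refine (((hasDerivAt_const t 1).fun_sub (hu.fun_pow 2)).sqrt (by linarith)).congr_deriv ?_
  field_simp
  ring

theorem HasDerivAt.div_sqrt_one_sub_sq (hu : HasDerivAt u u' t) (ht : u t ^ 2 < 1) :
    HasDerivAt (fun x => u x / √(1 - u x ^ 2)) (u' / √(1 - u t ^ 2) ^ 3) t := by
  have hs : 0 < √(1 - u t ^ 2) := sqrt_pos.mpr (by linarith)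
  refine (hu.div (hu.sqrt_one_sub_sq ht) hs.ne').congr_deriv ?_
  field_simp
  rw [sq_sqrt (by linarith)]
  ring

end SqrtOneSubSq

theorem ContDiffOn.hasDerivAt_deriv_of_isOpen {f : ℝ → ℝ} {s : Set ℝ} (hf : ContDiffOn ℝ 2 f s)
    (hs : IsOpen s) {t : ℝ} (ht : t ∈ s) : HasDerivAt (deriv f) (deriv (deriv f) t) t :=
  (((hf.deriv_of_isOpen hs (by norm_num : (1 : WithTop ℕ∞) + 1 ≤ 2)).contDiffAt
    (hs.mem_nhds ht)).differentiableAt one_ne_zero).hasDerivAt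

theorem rpow_three_halves_eq_sqrt_pow_three {x : ℝ} (hx : 0 ≤ x) :
    x ^ ((3 : ℝ) / 2) = √x ^ 3 := by
  rw [rpow_div_two_eq_sqrt _ hx]
  exact_mod_cast rpow_natCast (√x) 3

theorem eta_gamma_identities_of_ode {d y c k s : ℝ} (hs : 0 < s) (hs2 : s ^ 2 = 1 - c ^ 2)
    (hode : y * k + d * (1 - c ^ 2) = (d + 1) * y * s ^ 3) :
    y * s * (k / s ^ 3) = (d + 1) * (y * s) - d ∧
      c * s + y * (-(c * k) / s) = c * s * (d + 1) * (1 - y * s) := by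
  have hyk : y * k = (d + 1) * y * s ^ 3 - d * s ^ 2 := by linear_combination hode + d * hs2
  constructor
  · field_simp
    linear_combination hyk
  · field_simp
    linear_combination (-c) * hyk

theorem stmt4_general (d : ℕ) (a b : ℝ) (f : ℝ → ℝ)
    (hf : ContDiffOn ℝ 2 f (Set.Ioo a b))
    (hder : ∀ t ∈ Set.Ioo a b, |deriv f t| < 1)
    (hode : ∀ t ∈ Set.Ioo a b,
      f t * deriv (deriv f) t + (d : ℝ) * (1 - (deriv f t) ^ 2)
        = ((d : ℝ) + 1) * f t * (1 - (deriv f t) ^ 2) ^ ((3 : ℝ) / 2))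
    (γ η : ℝ → ℝ)
    (hγ : ∀ t, γ t = deriv f t / Real.sqrt (1 - (deriv f t) ^ 2))
    (hη : ∀ t, η t = f t * Real.sqrt (1 - (deriv f t) ^ 2)) :
    ∀ t ∈ Set.Ioo a b,
      η t * deriv γ t = ((d : ℝ) + 1) * η t - (d : ℝ) ∧
      deriv η t = deriv f t * Real.sqrt (1 - (deriv f t) ^ 2) * ((d : ℝ) + 1) * (1 - η t) := by
  intro t ht
  have hsq : deriv f t ^ 2 < 1 := (sq_lt_one_iff_abs_lt_one _).mpr (hder t ht)
  have hf' : HasDerivAt f (deriv f t) t :=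
    ((hf.contDiffAt (isOpen_Ioo.mem_nhds ht)).differentiableAt two_ne_zero).hasDerivAt
  have hf'' := hf.hasDerivAt_deriv_of_isOpen isOpen_Ioo ht
  have hode_t := hode t ht
  rw [rpow_three_halves_eq_sqrt_pow_three (by linarith)] at hode_t
  rw [hη t, funext hγ, funext hη, (hf''.div_sqrt_one_sub_sq hsq).deriv,
    (hf'.fun_mul (hf''.sqrt_one_sub_sq hsq)).deriv]
  exact eta_gamma_identities_of_ode (sqrt_pos.mpr (by linarith)) (sq_sqrt (by linarith)) hode_t

/-- The auxiliary quantities `γ = f'/√(1-(f')²)` and `η = f·√(1-(f')²)` satisfy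
`η·γ' = (d+1)·η − d` and `η' = f'·√(1-(f')²)·(d+1)·(1 − η)`. -/
theorem stmt4 (d : ℕ) (hd : 1 ≤ d) (a b : ℝ) (f : ℝ → ℝ)
    (hf : ContDiffOn ℝ 2 f (Set.Ioo a b))
    (hpos : ∀ t ∈ Set.Ioo a b, 0 < f t)
    (hder : ∀ t ∈ Set.Ioo a b, |deriv f t| < 1)
    (hode : ∀ t ∈ Set.Ioo a b,
      f t * deriv (deriv f) t + (d : ℝ) * (1 - (deriv f t) ^ 2)
        = ((d : ℝ) + 1) * f t * (1 - (deriv f t) ^ 2) ^ ((3 : ℝ) / 2))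
    (γ η : ℝ → ℝ)
    (hγ : ∀ t, γ t = deriv f t / Real.sqrt (1 - (deriv f t) ^ 2))
    (hη : ∀ t, η t = f t * Real.sqrt (1 - (deriv f t) ^ 2)) :
    ∀ t ∈ Set.Ioo a b,
      η t * deriv γ t = ((d : ℝ) + 1) * η t - (d : ℝ) ∧
      deriv η t = deriv f t * Real.sqrt (1 - (deriv f t) ^ 2) * ((d : ℝ) + 1) * (1 - η t) :=
  stmt4_general d a b f hf hder hode γ η hγ hη
end

section
/- Let f be a positive C² solution of the spherically symmetric CMC ODE on (t₀, ∞) with f' never vanishing and |f'| < 1 throughout. If lim_{t→∞} f(t) exists and is finite, then lim_{t→∞} f(t) = d/(d+1). -/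
/-!
The quantity `E = f^d / √(1 - f'^2) - f^(d+1)` is a first integral of the ODE. Since `f` has a
limit `L`, the mean value theorem gives points tending to infinity where `f' → 0`, so
`E = L^d - L^(d+1)`. This forces `L > 0` (for `L = 0` it would give `f = 1 / √(1 - f'^2) ≥ 1`)
and then `√(1 - f'^2) → 1`, i.e. `f' → 0`. The ODE now gives `f'' → ((d+1) L - d) / L`, and this
limit must vanish because `f'` converges.
-/

open Set Filter Topology

section TendstoDeriv

variable {g g' : ℝ → ℝ} {a L : ℝ}

theorem exists_tendsto_deriv_comp_zero_of_tendsto (hg : ∀ t ∈ Ioi a, HasDerivAt g (g' t) t)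
    (hL : Tendsto g atTop (𝓝 L)) :
    ∃ ξ : ℝ → ℝ, Tendsto ξ atTop atTop ∧ Tendsto (g' ∘ ξ) atTop (𝓝 0) := by
  have hmvt : ∀ t ∈ Ioi a, ∃ c ∈ Ioo t (t + 1), g' c = g (t + 1) - g t := by
    intro t ht
    obtain ⟨c, hc, hslope⟩ := exists_hasDerivAt_eq_slope g g' (lt_add_one t)
      (fun x hx => (hg x (ht.trans_le hx.1)).continuousAt.continuousWithinAt)
      (fun x hx => hg x (ht.trans hx.1))
    exact ⟨c, hc, by rwa [add_sub_cancel_left, div_one] at hslope⟩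
  choose! ξ hξ hg'ξ using hmvt
  have hincr : Tendsto (fun t => g (t + 1) - g t) atTop (𝓝 0) := by
    simpa using (hL.comp (tendsto_atTop_add_const_right _ 1 tendsto_id)).sub hL
  exact ⟨ξ, tendsto_atTop_mono' _ ((eventually_gt_atTop a).mono fun t ht => (hξ t ht).1.le)
      tendsto_id, hincr.congr' ((eventually_gt_atTop a).mono fun t ht => (hg'ξ t ht).symm)⟩

theorem eq_zero_of_tendsto_deriv_of_tendsto {C : ℝ} (hg : ∀ t ∈ Ioi a, HasDerivAt g (g' t) t)
    (hL : Tendsto g atTop (𝓝 L)) (hC : Tendsto g' atTop (𝓝 C)) : C = 0 := by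
  obtain ⟨ξ, hξ, hg'ξ⟩ := exists_tendsto_deriv_comp_zero_of_tendsto hg hL
  exact tendsto_nhds_unique (hC.comp hξ) hg'ξ

end TendstoDeriv

theorem HasDerivAt.pow_of_ne_zero {f : ℝ → ℝ} {f' t : ℝ} (hf : HasDerivAt f f' t)
    (hft : f t ≠ 0) (n : ℕ) : HasDerivAt (fun x => f x ^ n) (n * f t ^ n / f t * f') t := by
  refine (hf.pow n).congr_deriv ?_
  cases n with
  | zero => simp
  | succ n => rw [Nat.add_sub_cancel, pow_succ]; field_simp

theorem sqrt_one_sub_sq_pos {p : ℝ} (hp : |p| < 1) : 0 < √(1 - p ^ 2) := by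
  rw [Real.sqrt_pos, sub_pos, sq_lt_one_iff_abs_lt_one]
  exact hp

theorem tendsto_zero_of_tendsto_sqrt_one_sub_sq {α : Type*} {l : Filter α} {p : α → ℝ}
    (h : Tendsto (fun x => √(1 - p x ^ 2)) l (𝓝 1)) : Tendsto p l (𝓝 0) := by
  have hq : Tendsto (fun x => 1 - p x ^ 2) l (𝓝 1) := by
    simpa using (h.pow 2).congr' ((h.eventually (lt_mem_nhds one_pos)).mono fun x hx =>
      Real.sq_sqrt (Real.sqrt_pos.1 hx).le)
  have hp2 : Tendsto (fun x => p x ^ 2) l (𝓝 0) := by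
    simpa using (tendsto_const_nhds (x := (1 : ℝ))).sub hq
  rw [tendsto_zero_iff_abs_tendsto_zero]
  simpa [Function.comp_def, Real.sqrt_sq_eq_abs] using hp2.sqrt

noncomputable def cmcEnergy (d : ℕ) (y p : ℝ) : ℝ := y ^ d / √(1 - p ^ 2) - y ^ (d + 1)

theorem hasDerivAt_cmcEnergy (d : ℕ) {f u : ℝ → ℝ} {v t : ℝ} (hf : HasDerivAt f (u t) t)
    (hu : HasDerivAt u v t) (hft : f t ≠ 0) (hut : |u t| < 1)
    (hode : f t * v + d * (1 - u t ^ 2) = (d + 1) * f t * (1 - u t ^ 2) ^ ((3 : ℝ) / 2)) :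
    HasDerivAt (fun x => cmcEnergy d (f x) (u x)) 0 t := by
  have hs := sqrt_one_sub_sq_pos hut
  have hq := Real.sqrt_pos.1 hs
  have hode' : f t * v + d * √(1 - u t ^ 2) ^ 2 = (d + 1) * f t * √(1 - u t ^ 2) ^ 3 := by
    rw [Real.sq_sqrt hq.le, hode, Real.rpow_div_two_eq_sqrt _ hq.le]
    norm_cast
  have hq' : HasDerivAt (fun x => 1 - u x ^ 2) (-(2 * u t * v)) t := by
    simpa using (hu.pow 2).const_sub 1
  refine (((hf.pow_of_ne_zero hft d).div (hq'.sqrt hq.ne') hs.ne').sub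
    (hf.pow_of_ne_zero hft (d + 1))).congr_deriv ?_
  -- with `s = √(1 - u²)`, the derivative is `u f^(d-1) / s³ * (f v + d s² - (d+1) f s³)`
  generalize √(1 - u t ^ 2) = s at *
  field_simp
  push_cast
  linear_combination (u t * f t ^ d) * hode'

section CmcEnergy

variable {d : ℕ} {y p e : ℝ}

@[simp]
theorem cmcEnergy_zero_right : cmcEnergy d y 0 = y ^ d - y ^ (d + 1) := by
  simp [cmcEnergy]

theorem sqrt_one_sub_sq_eq_of_cmcEnergy_eq (hy : 0 < y) (h : cmcEnergy d y p = e) :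
    √(1 - p ^ 2) = y ^ d / (e + y ^ (d + 1)) := by
  rw [← h, cmcEnergy, sub_add_cancel, div_div_cancel₀ (pow_ne_zero d hy.ne')]

theorem one_le_of_cmcEnergy_eq_zero (hy : 0 < y) (h : cmcEnergy d y p = 0) :
    1 ≤ y := by
  have hs := sqrt_one_sub_sq_eq_of_cmcEnergy_eq hy h
  rw [zero_add, pow_succ y d, div_mul_cancel_left₀ (pow_ne_zero d hy.ne')] at hs
  rw [← inv_le_one₀ hy, ← hs, Real.sqrt_le_one]
  nlinarith [sq_nonneg p]

theorem Filter.Tendsto.cmcEnergy {α : Type*} {l : Filter α} {f q : α → ℝ} (d : ℕ)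
    (hf : Tendsto f l (𝓝 y)) (hq : Tendsto q l (𝓝 p)) (hp : |p| < 1) :
    Tendsto (fun x => cmcEnergy d (f x) (q x)) l (𝓝 (cmcEnergy d y p)) :=
  ((hf.pow d).div (tendsto_const_nhds.sub (hq.pow 2)).sqrt (sqrt_one_sub_sq_pos hp).ne').sub
    (hf.pow (d + 1))

end CmcEnergy

structure IsCmcSolution (d : ℕ) (t₀ : ℝ) (f : ℝ → ℝ) : Prop where
  contDiffOn : ContDiffOn ℝ 2 f (Ioi t₀)
  pos : ∀ t ∈ Ioi t₀, 0 < f t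
  abs_deriv_lt_one : ∀ t ∈ Ioi t₀, |deriv f t| < 1
  ode : ∀ t ∈ Ioi t₀, f t * deriv (deriv f) t + (d : ℝ) * (1 - deriv f t ^ 2) =
    ((d : ℝ) + 1) * f t * (1 - deriv f t ^ 2) ^ ((3 : ℝ) / 2)

namespace IsCmcSolution

variable {d : ℕ} {t₀ L t : ℝ} {f : ℝ → ℝ}

theorem hasDerivAt (h : IsCmcSolution d t₀ f) (ht : t ∈ Ioi t₀) :
    HasDerivAt f (deriv f t) t :=
  ((h.contDiffOn.contDiffAt (isOpen_Ioi.mem_nhds ht)).differentiableAt (by norm_num)).hasDerivAt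

theorem hasDerivAt_deriv (h : IsCmcSolution d t₀ f) (ht : t ∈ Ioi t₀) :
    HasDerivAt (deriv f) (deriv (deriv f) t) t :=
  (((h.contDiffOn.deriv_of_isOpen (m := 1) isOpen_Ioi (by norm_num)).contDiffAt
    (isOpen_Ioi.mem_nhds ht)).differentiableAt (by norm_num)).hasDerivAt

theorem cmcEnergy_eq_of_tendsto (h : IsCmcSolution d t₀ f) (hlim : Tendsto f atTop (𝓝 L)) :
    ∀ t ∈ Ioi t₀, cmcEnergy d (f t) (deriv f t) = L ^ d - L ^ (d + 1) := by
  have hE : ∀ t ∈ Ioi t₀, HasDerivAt (fun x => cmcEnergy d (f x) (deriv f x)) 0 t :=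
    fun t ht => hasDerivAt_cmcEnergy d (h.hasDerivAt ht) (h.hasDerivAt_deriv ht) (h.pos t ht).ne'
      (h.abs_deriv_lt_one t ht) (h.ode t ht)
  obtain ⟨e, he⟩ := isOpen_Ioi.exists_is_const_of_deriv_eq_zero isPreconnected_Ioi
    (fun t ht => (hE t ht).differentiableAt.differentiableWithinAt) fun t ht => (hE t ht).deriv
  obtain ⟨ξ, hξ, hf'ξ⟩ :=
    exists_tendsto_deriv_comp_zero_of_tendsto (fun t ht => h.hasDerivAt ht) hlim
  have hEξ := (hlim.comp hξ).cmcEnergy d hf'ξ (by simp)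
  rw [cmcEnergy_zero_right] at hEξ
  have he_L : e = L ^ d - L ^ (d + 1) := by
    refine tendsto_nhds_unique (tendsto_const_nhds.congr' ?_) hEξ
    exact (hξ.eventually (eventually_gt_atTop t₀)).mono fun t ht => (he (ξ t) ht).symm
  exact he_L ▸ he

theorem pos_of_tendsto (h : IsCmcSolution d t₀ f) (hd : 1 ≤ d) (hlim : Tendsto f atTop (𝓝 L)) :
    0 < L := by
  refine (ge_of_tendsto hlim ((eventually_gt_atTop t₀).mono fun t ht => (h.pos t ht).le)).lt_of_ne'
    fun hL => ?_
  have h1 : 1 ≤ L := ge_of_tendsto hlim <| (eventually_gt_atTop t₀).mono fun t ht =>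
    one_le_of_cmcEnergy_eq_zero (h.pos t ht) <| by
      rw [h.cmcEnergy_eq_of_tendsto hlim t ht, hL, zero_pow (by omega), zero_pow (by omega),
        sub_zero]
  linarith

theorem tendsto_deriv_atTop (h : IsCmcSolution d t₀ f) (hd : 1 ≤ d)
    (hlim : Tendsto f atTop (𝓝 L)) : Tendsto (deriv f) atTop (𝓝 0) := by
  have hLd : L ^ d ≠ 0 := pow_ne_zero d (h.pos_of_tendsto hd hlim).ne'
  have hden : L ^ d - L ^ (d + 1) + L ^ (d + 1) = L ^ d := sub_add_cancel _ _
  have hs := (hlim.pow d).div (tendsto_const_nhds.add (hlim.pow (d + 1))) (hden ▸ hLd)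
  rw [hden, div_self hLd] at hs
  refine tendsto_zero_of_tendsto_sqrt_one_sub_sq (hs.congr' ?_)
  exact (eventually_gt_atTop t₀).mono fun t ht =>
    (sqrt_one_sub_sq_eq_of_cmcEnergy_eq (h.pos t ht) (h.cmcEnergy_eq_of_tendsto hlim t ht)).symm

theorem tendsto_deriv_deriv_atTop (h : IsCmcSolution d t₀ f) (hd : 1 ≤ d)
    (hlim : Tendsto f atTop (𝓝 L)) :
    Tendsto (deriv (deriv f)) atTop (𝓝 (((d + 1) * L - d) / L)) := by
  have hq : Tendsto (fun t => 1 - deriv f t ^ 2) atTop (𝓝 1) := by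
    simpa using tendsto_const_nhds.sub ((h.tendsto_deriv_atTop hd hlim).pow 2)
  have hv := ((((tendsto_const_nhds (x := (d + 1 : ℝ))).mul hlim).mul
    (hq.rpow_const (p := 3 / 2) (Or.inl one_ne_zero))).sub
    ((tendsto_const_nhds (x := (d : ℝ))).mul hq)).div hlim (h.pos_of_tendsto hd hlim).ne'
  simp only [Real.one_rpow, mul_one] at hv
  refine hv.congr' ((eventually_gt_atTop t₀).mono fun t ht => ?_)
  rw [Pi.div_apply, div_eq_iff (h.pos t ht).ne', ← h.ode t ht]
  ring

end IsCmcSolution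

theorem stmt6_general (d : ℕ) (hd : 1 ≤ d) (t₀ : ℝ) (f : ℝ → ℝ) (L : ℝ)
    (hf : ContDiffOn ℝ 2 f (Set.Ioi t₀))
    (hpos : ∀ t ∈ Set.Ioi t₀, 0 < f t)
    (hder : ∀ t ∈ Set.Ioi t₀, |deriv f t| < 1)
    (hode : ∀ t ∈ Set.Ioi t₀,
      f t * deriv (deriv f) t + (d : ℝ) * (1 - (deriv f t) ^ 2)
        = ((d : ℝ) + 1) * f t * (1 - (deriv f t) ^ 2) ^ ((3 : ℝ) / 2))
    (hlim : Filter.Tendsto f Filter.atTop (nhds L)) :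
    L = (d : ℝ) / ((d : ℝ) + 1) := by
  have hsol : IsCmcSolution d t₀ f := ⟨hf, hpos, hder, hode⟩
  have hC := eq_zero_of_tendsto_deriv_of_tendsto (fun t ht => hsol.hasDerivAt_deriv ht)
    (hsol.tendsto_deriv_atTop hd hlim) (hsol.tendsto_deriv_deriv_atTop hd hlim)
  rw [div_eq_zero_iff, sub_eq_zero] at hC
  rw [eq_div_iff (by positivity)]
  linarith [hC.resolve_right (hsol.pos_of_tendsto hd hlim).ne']

/-- If a positive solution of the spherically symmetric CMC ODE on `(t₀, ∞)` has
nonvanishing derivative and a finite limit at infinity, then that limit is `d/(d+1)`. -/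
theorem stmt6 (d : ℕ) (hd : 1 ≤ d) (t₀ : ℝ) (f : ℝ → ℝ) (L : ℝ)
    (hf : ContDiffOn ℝ 2 f (Set.Ioi t₀))
    (hpos : ∀ t ∈ Set.Ioi t₀, 0 < f t)
    (hder : ∀ t ∈ Set.Ioi t₀, |deriv f t| < 1)
    (hder0 : ∀ t ∈ Set.Ioi t₀, deriv f t ≠ 0)
    (hode : ∀ t ∈ Set.Ioi t₀,
      f t * deriv (deriv f) t + (d : ℝ) * (1 - (deriv f t) ^ 2)
        = ((d : ℝ) + 1) * f t * (1 - (deriv f t) ^ 2) ^ ((3 : ℝ) / 2))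
    (hlim : Filter.Tendsto f Filter.atTop (nhds L)) :
    L = (d : ℝ) / ((d : ℝ) + 1) :=
  stmt6_general d hd t₀ f L hf hpos hder hode hlim
end

section
/- Let f₁ and f₂ be two distinct C² positive solutions of the spherically symmetric CMC ODE with |f₁'|, |f₂'| < 1 on a common interval. Then the function (f₂ − f₁)² has at most one critical point on that interval, and any critical point is a strict local minimum. -/
/-!
Write `g = f₂ - f₁`, so that `((f₂ - f₁)²)' = 2 g g'`. As long as `f ≠ 0` and `|f'| < 1` the CMC
equation is a `C¹` first-order system for the jet `(f, f')`, so two distinct solutions never share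
a jet. Hence at a zero of `g` we have `g' ≠ 0`, and `g²` has a strict local minimum there. At a
zero of `g'` we have `g ≠ 0`, and subtracting the two equations at the common slope gives
`g g'' = d (1 - f'²) g² / (f₁ f₂) > 0`, so `(g²)'' = 2 g g'' > 0`. Finally, if every critical point
of a continuous function on an interval is a strict local minimum, there is at most one: between
two of them the maximum would be a further critical point.
-/

open Set Filter Topology

section StrictExtremum

variable {f : ℝ → ℝ} {x₀ : ℝ}

lemma eventually_nhdsGT_lt_of_deriv_pos (hc : ContinuousAt f x₀)
    (hf : ∀ᶠ x in 𝓝[>] x₀, 0 < deriv f x) : ∀ᶠ x in 𝓝[>] x₀, f x₀ < f x := by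
  obtain ⟨c, hx₀c, hpos⟩ := (nhdsGT_basis x₀).eventually_iff.mp hf
  have hcont : ContinuousOn f (Ico x₀ c) := by
    rintro x ⟨hx₀x, hxc⟩
    rcases hx₀x.eq_or_lt with rfl | hlt
    · exact hc.continuousWithinAt
    · exact (differentiableAt_of_deriv_ne_zero (hpos ⟨hlt, hxc⟩).ne').continuousAt
        |>.continuousWithinAt
  have hmono : StrictMonoOn f (Ico x₀ c) :=
    strictMonoOn_of_deriv_pos (convex_Ico x₀ c) hcont fun x hx ↦
      hpos (by rwa [interior_Ico] at hx)
  filter_upwards [Ioo_mem_nhdsGT hx₀c] with x hx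
  exact hmono (left_mem_Ico.mpr hx₀c) (Ioo_subset_Ico_self hx) hx.1

lemma eventually_nhdsLT_lt_of_deriv_neg (hc : ContinuousAt f x₀)
    (hf : ∀ᶠ x in 𝓝[<] x₀, deriv f x < 0) : ∀ᶠ x in 𝓝[<] x₀, f x₀ < f x := by
  obtain ⟨c, hcx₀, hneg⟩ := (nhdsLT_basis x₀).eventually_iff.mp hf
  have hcont : ContinuousOn f (Ioc c x₀) := by
    rintro x ⟨hcx, hxx₀⟩
    rcases hxx₀.eq_or_lt with rfl | hlt
    · exact hc.continuousWithinAt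
    · exact (differentiableAt_of_deriv_ne_zero (hneg ⟨hcx, hlt⟩).ne).continuousAt
        |>.continuousWithinAt
  have hanti : StrictAntiOn f (Ioc c x₀) :=
    strictAntiOn_of_deriv_neg (convex_Ioc c x₀) hcont fun x hx ↦
      hneg (by rwa [interior_Ioc] at hx)
  filter_upwards [Ioo_mem_nhdsLT hcx₀] with x hx
  exact hanti (Ioo_subset_Ioc_self hx) (right_mem_Ioc.mpr hcx₀) hx.2

theorem eventually_nhdsNE_lt_of_deriv_deriv_pos (hf : 0 < deriv (deriv f) x₀)
    (hd : deriv f x₀ = 0) (hc : ContinuousAt f x₀) : ∀ᶠ x in 𝓝[≠] x₀, f x₀ < f x := by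
  have hsign := nhdsWithin_le_nhds (s := {x₀}ᶜ)
    (eventually_nhdsWithin_sign_eq_of_deriv_pos hf hd)
  rw [← nhdsLT_sup_nhdsGT, eventually_sup]
  exact ⟨eventually_nhdsLT_lt_of_deriv_neg hc (deriv_neg_left_of_sign_deriv hsign),
    eventually_nhdsGT_lt_of_deriv_pos hc (deriv_pos_right_of_sign_deriv hsign)⟩

end StrictExtremum

theorem Set.OrdConnected.subsingleton_of_forall_deriv_eq_zero_strict_min {s : Set ℝ}
    {f : ℝ → ℝ} (hs : s.OrdConnected) (hf : ContinuousOn f s)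
    (hmin : ∀ t ∈ s, deriv f t = 0 → ∀ᶠ x in 𝓝[≠] t, f t < f x) :
    {t ∈ s | deriv f t = 0}.Subsingleton := by
  intro t₁ ⟨h₁, hc₁⟩ t₂ ⟨h₂, hc₂⟩
  by_contra hne
  wlog hlt : t₁ < t₂ generalizing t₁ t₂
  · exact this h₂ hc₂ h₁ hc₁ (Ne.symm hne) (lt_of_le_of_ne (not_lt.1 hlt) (Ne.symm hne))
  obtain ⟨t, ht, hmax⟩ := isCompact_Icc.exists_isMaxOn (nonempty_Icc.mpr hlt.le)
    (hf.mono (hs.out h₁ h₂))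
  have hct : deriv f t = 0 := by
    rcases eq_endpoints_or_mem_Ioo_of_mem_Icc ht with rfl | rfl | hin
    · exact hc₁
    · exact hc₂
    · exact (hmax.isLocalMax (Icc_mem_nhds hin.1 hin.2)).deriv_eq_zero
  have hstrict := hmin t (hs.out h₁ h₂ ht) hct
  obtain ⟨x, hfx, hx⟩ : ∃ x, f t < f x ∧ x ∈ Icc t₁ t₂ := by
    rcases ht.2.eq_or_lt with rfl | hlt'
    · exact ((hstrict.filter_mono (nhdsLT_le_nhdsNE t)).and (Icc_mem_nhdsLT hlt)).exists
    · exact ((hstrict.filter_mono (nhdsGT_le_nhdsNE t)).and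
        (Icc_mem_nhdsGT_of_mem ⟨ht.1, hlt'⟩)).exists
  exact (hmax hx).not_gt hfx

section AutonomousODE

variable {E : Type*} [NormedAddCommGroup E] [NormedSpace ℝ E] {v : E → E} {u₁ u₂ : ℝ → E}

theorem eventuallyEq_of_hasDerivAt_of_contDiffAt {t₀ : ℝ} (hv : ContDiffAt ℝ 1 v (u₁ t₀))
    (hu₁ : ∀ᶠ t in 𝓝 t₀, HasDerivAt u₁ (v (u₁ t)) t)
    (hu₂ : ∀ᶠ t in 𝓝 t₀, HasDerivAt u₂ (v (u₂ t)) t) (heq : u₁ t₀ = u₂ t₀) :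
    u₁ =ᶠ[𝓝 t₀] u₂ := by
  obtain ⟨K, U, hU, hK⟩ := hv.exists_lipschitzOnWith
  have hU₂ : U ∈ 𝓝 (u₂ t₀) := heq ▸ hU
  refine ODE_solution_unique_of_eventually (v := fun _ ↦ v) (s := fun _ ↦ U)
    (.of_forall fun _ ↦ hK) ?_ ?_ heq
  · exact hu₁.and (hu₁.self_of_nhds.continuousAt.eventually_mem hU)
  · exact hu₂.and (hu₂.self_of_nhds.continuousAt.eventually_mem hU₂)

theorem eqOn_of_hasDerivAt_of_contDiffAt {s : Set ℝ} {t₀ : ℝ} (hs : IsOpen s)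
    (hs' : IsPreconnected s) (hv : ∀ t ∈ s, ContDiffAt ℝ 1 v (u₁ t))
    (hu₁ : ∀ t ∈ s, HasDerivAt u₁ (v (u₁ t)) t) (hu₂ : ∀ t ∈ s, HasDerivAt u₂ (v (u₂ t)) t)
    (ht₀ : t₀ ∈ s) (heq : u₁ t₀ = u₂ t₀) : EqOn u₁ u₂ s := by
  have hloc : ∀ t ∈ s, u₁ t = u₂ t → u₁ =ᶠ[𝓝 t] u₂ := fun t ht ↦
    eventuallyEq_of_hasDerivAt_of_contDiffAt (hv t ht)
      (eventually_of_mem (hs.mem_nhds ht) hu₁) (eventually_of_mem (hs.mem_nhds ht) hu₂)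
  suffices s ⊆ {t | u₁ =ᶠ[𝓝 t] u₂} from fun t ht ↦ (this ht).self_of_nhds
  refine hs'.subset_of_closure_inter_subset isOpen_setOfPred_eventually_nhds
    ⟨t₀, ht₀, hloc t₀ ht₀ heq⟩ ?_
  rintro t ⟨hcl, ht⟩
  refine hloc t ht (tendsto_nhds_unique_of_frequently_eq (hu₁ t ht).continuousAt
    (hu₂ t ht).continuousAt ?_)
  exact (mem_closure_iff_frequently.mp hcl).mono fun _ h ↦ h.eq_of_nhds

end AutonomousODE

lemma eventually_nhdsNE_sq_lt_of_hasDerivAt_ne_zero {g : ℝ → ℝ} {g' t : ℝ}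
    (hg : HasDerivAt g g' t) (hg' : g' ≠ 0) (h0 : g t = 0) :
    ∀ᶠ x in 𝓝[≠] t, g t ^ 2 < g x ^ 2 := by
  filter_upwards [hg.eventually_ne (c := 0) hg'] with x hx
  rw [h0, sq_lt_sq, abs_zero]
  exact abs_pos.mpr hx

lemma eventually_nhdsNE_sq_lt_of_deriv_eq_zero {g g' : ℝ → ℝ} {g'' t : ℝ}
    (hg : ∀ᶠ x in 𝓝 t, HasDerivAt g (g' x) x) (hg' : HasDerivAt g' g'' t)
    (h0 : g' t = 0) (hpos : 0 < g t * g'') :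
    ∀ᶠ x in 𝓝[≠] t, g t ^ 2 < g x ^ 2 := by
  have hsq : deriv (fun x ↦ g x ^ 2) =ᶠ[𝓝 t] fun x ↦ 2 * g x * g' x := by
    filter_upwards [hg] with x hx
    simpa using (hx.fun_pow 2).deriv
  have hsq' : HasDerivAt (deriv fun x ↦ g x ^ 2) (2 * (g t * g'')) t := by
    refine (((hg.self_of_nhds.const_mul 2).mul hg').congr_of_eventuallyEq hsq).congr_deriv ?_
    rw [h0]
    ring
  refine eventually_nhdsNE_lt_of_deriv_deriv_pos (f := fun x ↦ g x ^ 2) ?_ ?_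
    (hg.self_of_nhds.continuousAt.pow 2)
  · rw [hsq'.deriv]
    positivity
  · rw [hsq.eq_of_nhds, h0, mul_zero]

lemma ContDiffOn.hasDerivAt_deriv {f : ℝ → ℝ} {s : Set ℝ} {t : ℝ} (hf : ContDiffOn ℝ 2 f s)
    (hs : IsOpen s) (ht : t ∈ s) : HasDerivAt (deriv f) (deriv (deriv f) t) t :=
  (((hf.deriv_of_isOpen hs (m := 1) (by norm_num)).differentiableOn one_ne_zero).differentiableAt
    (hs.mem_nhds ht)).hasDerivAt

lemma ContDiffOn.hasDerivAt {f : ℝ → ℝ} {s : Set ℝ} {t : ℝ} (hf : ContDiffOn ℝ 2 f s)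
    (hs : IsOpen s) (ht : t ∈ s) : HasDerivAt f (deriv f t) t :=
  ((hf.differentiableOn (by norm_num)).differentiableAt (hs.mem_nhds ht)).hasDerivAt

/-- The CMC equation `f f'' + d (1 - f'²) = (d + 1) f (1 - f'²)^{3/2}` as a first-order system
for the jet `(f, f')`. -/
noncomputable def cmcField (d : ℝ) (u : ℝ × ℝ) : ℝ × ℝ :=
  (u.2, (d + 1) * (1 - u.2 ^ 2) ^ ((3 : ℝ) / 2) - d * (1 - u.2 ^ 2) / u.1)

lemma contDiffAt_cmcField (d : ℝ) {u : ℝ × ℝ} (h₁ : u.1 ≠ 0) (h₂ : |u.2| < 1) :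
    ContDiffAt ℝ 1 (cmcField d) u := by
  have hq : ContDiffAt ℝ 1 (fun u : ℝ × ℝ ↦ 1 - u.2 ^ 2) u :=
    contDiffAt_const.sub (contDiffAt_snd.pow 2)
  have hq₀ : 1 - u.2 ^ 2 ≠ 0 := by
    nlinarith [abs_lt.mp h₂]
  exact contDiffAt_snd.prodMk ((contDiffAt_const.mul (hq.rpow_const_of_ne hq₀)).sub
    ((contDiffAt_const.mul hq).div contDiffAt_fst h₁))

lemma hasDerivAt_jet_of_cmc {d t : ℝ} {f : ℝ → ℝ} (hf : HasDerivAt f (deriv f t) t)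
    (hf' : HasDerivAt (deriv f) (deriv (deriv f) t) t) (hf₀ : f t ≠ 0)
    (hode : f t * deriv (deriv f) t + d * (1 - deriv f t ^ 2)
      = (d + 1) * f t * (1 - deriv f t ^ 2) ^ ((3 : ℝ) / 2)) :
    HasDerivAt (fun s ↦ (f s, deriv f s)) (cmcField d (f t, deriv f t)) t := by
  convert hf.prodMk hf' using 1
  refine Prod.ext rfl ?_
  dsimp only [cmcField]
  field_simp
  linarith

/-- `xᵢ`, `yᵢ` stand for `fᵢ`, `fᵢ''`, and `q`, `r` for `1 - f'²`, `(1 - f'²)^{3/2}` at a slope `f'`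
common to both profiles. -/
lemma sub_mul_sub_eq_of_cmc {d q r x₁ x₂ y₁ y₂ : ℝ} (hx₁ : x₁ ≠ 0) (hx₂ : x₂ ≠ 0)
    (h₁ : x₁ * y₁ + d * q = (d + 1) * x₁ * r) (h₂ : x₂ * y₂ + d * q = (d + 1) * x₂ * r) :
    (x₂ - x₁) * (y₂ - y₁) = d * q * (x₂ - x₁) ^ 2 / (x₁ * x₂) := by
  have hy₁ : y₁ = (d + 1) * r - d * q / x₁ := by field_simp; linarith
  have hy₂ : y₂ = (d + 1) * r - d * q / x₂ := by field_simp; linarith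
  rw [hy₁, hy₂]
  field_simp
  ring

section CMC

variable {d : ℝ} {s : Set ℝ} {f₁ f₂ : ℝ → ℝ}

theorem cmc_eqOn_of_jet_eq {t₀ : ℝ} (hs : IsOpen s) (hs' : IsPreconnected s)
    (hf₁ : ContDiffOn ℝ 2 f₁ s) (hf₂ : ContDiffOn ℝ 2 f₂ s)
    (hne₁ : ∀ t ∈ s, f₁ t ≠ 0) (hne₂ : ∀ t ∈ s, f₂ t ≠ 0) (hder₁ : ∀ t ∈ s, |deriv f₁ t| < 1)
    (hode₁ : ∀ t ∈ s, f₁ t * deriv (deriv f₁) t + d * (1 - deriv f₁ t ^ 2)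
      = (d + 1) * f₁ t * (1 - deriv f₁ t ^ 2) ^ ((3 : ℝ) / 2))
    (hode₂ : ∀ t ∈ s, f₂ t * deriv (deriv f₂) t + d * (1 - deriv f₂ t ^ 2)
      = (d + 1) * f₂ t * (1 - deriv f₂ t ^ 2) ^ ((3 : ℝ) / 2))
    (ht₀ : t₀ ∈ s) (hjet : (f₁ t₀, deriv f₁ t₀) = (f₂ t₀, deriv f₂ t₀)) : EqOn f₁ f₂ s :=
  fun _ ht ↦ congrArg Prod.fst <| eqOn_of_hasDerivAt_of_contDiffAt (v := cmcField d) hs hs'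
    (fun x hx ↦ contDiffAt_cmcField d (hne₁ x hx) (hder₁ x hx))
    (fun x hx ↦ hasDerivAt_jet_of_cmc (hf₁.hasDerivAt hs hx) (hf₁.hasDerivAt_deriv hs hx)
      (hne₁ x hx) (hode₁ x hx))
    (fun x hx ↦ hasDerivAt_jet_of_cmc (hf₂.hasDerivAt hs hx) (hf₂.hasDerivAt_deriv hs hx)
      (hne₂ x hx) (hode₂ x hx))
    ht₀ hjet ht

theorem cmc_eventually_nhdsNE_sq_sub_lt {t : ℝ} (hd : 0 < d) (hs : IsOpen s)
    (hf₁ : ContDiffOn ℝ 2 f₁ s) (hf₂ : ContDiffOn ℝ 2 f₂ s) (ht : t ∈ s)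
    (hpos₁ : 0 < f₁ t) (hpos₂ : 0 < f₂ t) (hder₁ : |deriv f₁ t| < 1)
    (hode₁ : f₁ t * deriv (deriv f₁) t + d * (1 - deriv f₁ t ^ 2)
      = (d + 1) * f₁ t * (1 - deriv f₁ t ^ 2) ^ ((3 : ℝ) / 2))
    (hode₂ : f₂ t * deriv (deriv f₂) t + d * (1 - deriv f₂ t ^ 2)
      = (d + 1) * f₂ t * (1 - deriv f₂ t ^ 2) ^ ((3 : ℝ) / 2))
    (hjet : (f₁ t, deriv f₁ t) ≠ (f₂ t, deriv f₂ t))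
    (hcrit : deriv (fun x ↦ (f₂ x - f₁ x) ^ 2) t = 0) :
    ∀ᶠ x in 𝓝[≠] t, (f₂ t - f₁ t) ^ 2 < (f₂ x - f₁ x) ^ 2 := by
  have hg : ∀ᶠ x in 𝓝 t, HasDerivAt (fun x ↦ f₂ x - f₁ x) (deriv f₂ x - deriv f₁ x) x := by
    filter_upwards [hs.mem_nhds ht] with x hx
    exact (hf₂.hasDerivAt hs hx).sub (hf₁.hasDerivAt hs hx)
  obtain h0 | h0 : f₂ t - f₁ t = 0 ∨ deriv f₂ t - deriv f₁ t = 0 := by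
    simpa [hcrit, eq_comm] using (hg.self_of_nhds.fun_pow 2).deriv
  · refine eventually_nhdsNE_sq_lt_of_hasDerivAt_ne_zero hg.self_of_nhds ?_ h0
    exact fun h0' ↦ hjet (Prod.ext (by linarith) (by linarith))
  · refine eventually_nhdsNE_sq_lt_of_deriv_eq_zero hg
      ((hf₂.hasDerivAt_deriv hs ht).sub (hf₁.hasDerivAt_deriv hs ht)) h0 ?_
    have hne : f₂ t - f₁ t ≠ 0 := fun h ↦ hjet (Prod.ext (by linarith) (by linarith))
    have hslope : deriv f₂ t = deriv f₁ t := by linarith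
    rw [hslope] at hode₂
    rw [sub_mul_sub_eq_of_cmc hpos₁.ne' hpos₂.ne' hode₁ hode₂]
    have : 0 < 1 - deriv f₁ t ^ 2 := by nlinarith [abs_lt.mp hder₁]
    positivity

end CMC

theorem stmt7_general (d : ℕ) (hd : 1 ≤ d) (a b : ℝ) (f₁ f₂ : ℝ → ℝ)
    (hf₁ : ContDiffOn ℝ 2 f₁ (Set.Ioo a b))
    (hf₂ : ContDiffOn ℝ 2 f₂ (Set.Ioo a b))
    (hpos₁ : ∀ t ∈ Set.Ioo a b, 0 < f₁ t)
    (hpos₂ : ∀ t ∈ Set.Ioo a b, 0 < f₂ t)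
    (hder₁ : ∀ t ∈ Set.Ioo a b, |deriv f₁ t| < 1)
    (hode₁ : ∀ t ∈ Set.Ioo a b,
      f₁ t * deriv (deriv f₁) t + (d : ℝ) * (1 - (deriv f₁ t) ^ 2)
        = ((d : ℝ) + 1) * f₁ t * (1 - (deriv f₁ t) ^ 2) ^ ((3 : ℝ) / 2))
    (hode₂ : ∀ t ∈ Set.Ioo a b,
      f₂ t * deriv (deriv f₂) t + (d : ℝ) * (1 - (deriv f₂ t) ^ 2)
        = ((d : ℝ) + 1) * f₂ t * (1 - (deriv f₂ t) ^ 2) ^ ((3 : ℝ) / 2))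
    (hdist : ¬ Set.EqOn f₁ f₂ (Set.Ioo a b)) :
    Set.Subsingleton {t ∈ Set.Ioo a b | deriv (fun s => (f₂ s - f₁ s) ^ 2) t = 0} ∧
    ∀ t ∈ Set.Ioo a b, deriv (fun s => (f₂ s - f₁ s) ^ 2) t = 0 →
      ∀ᶠ s in nhdsWithin t {t}ᶜ, (f₂ t - f₁ t) ^ 2 < (f₂ s - f₁ s) ^ 2 := by
  have hjet : ∀ t ∈ Ioo a b, (f₁ t, deriv f₁ t) ≠ (f₂ t, deriv f₂ t) := fun t ht hjet ↦
    hdist <| cmc_eqOn_of_jet_eq isOpen_Ioo isPreconnected_Ioo hf₁ hf₂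
      (fun x hx ↦ (hpos₁ x hx).ne') (fun x hx ↦ (hpos₂ x hx).ne') hder₁ hode₁ hode₂ ht hjet
  have hmin : ∀ t ∈ Ioo a b, deriv (fun s => (f₂ s - f₁ s) ^ 2) t = 0 →
      ∀ᶠ s in 𝓝[≠] t, (f₂ t - f₁ t) ^ 2 < (f₂ s - f₁ s) ^ 2 := fun t ht ↦
    cmc_eventually_nhdsNE_sq_sub_lt (Nat.cast_pos.mpr hd) isOpen_Ioo hf₁ hf₂ ht (hpos₁ t ht)
      (hpos₂ t ht) (hder₁ t ht) (hode₁ t ht) (hode₂ t ht) (hjet t ht)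
  exact ⟨ordConnected_Ioo.subsingleton_of_forall_deriv_eq_zero_strict_min
    ((hf₂.continuousOn.sub hf₁.continuousOn).pow 2) hmin, hmin⟩

/-- Maximum principle: for two distinct solutions `f₁, f₂` of the spherically symmetric
CMC ODE, the function `(f₂ − f₁)²` has at most one critical point, and any critical point
is a strict local minimum. -/
theorem stmt7 (d : ℕ) (hd : 1 ≤ d) (a b : ℝ) (f₁ f₂ : ℝ → ℝ)
    (hf₁ : ContDiffOn ℝ 2 f₁ (Set.Ioo a b))
    (hf₂ : ContDiffOn ℝ 2 f₂ (Set.Ioo a b))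
    (hpos₁ : ∀ t ∈ Set.Ioo a b, 0 < f₁ t)
    (hpos₂ : ∀ t ∈ Set.Ioo a b, 0 < f₂ t)
    (hder₁ : ∀ t ∈ Set.Ioo a b, |deriv f₁ t| < 1)
    (hder₂ : ∀ t ∈ Set.Ioo a b, |deriv f₂ t| < 1)
    (hode₁ : ∀ t ∈ Set.Ioo a b,
      f₁ t * deriv (deriv f₁) t + (d : ℝ) * (1 - (deriv f₁ t) ^ 2)
        = ((d : ℝ) + 1) * f₁ t * (1 - (deriv f₁ t) ^ 2) ^ ((3 : ℝ) / 2))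
    (hode₂ : ∀ t ∈ Set.Ioo a b,
      f₂ t * deriv (deriv f₂) t + (d : ℝ) * (1 - (deriv f₂ t) ^ 2)
        = ((d : ℝ) + 1) * f₂ t * (1 - (deriv f₂ t) ^ 2) ^ ((3 : ℝ) / 2))
    (hdist : ¬ Set.EqOn f₁ f₂ (Set.Ioo a b)) :
    Set.Subsingleton {t ∈ Set.Ioo a b | deriv (fun s => (f₂ s - f₁ s) ^ 2) t = 0} ∧
    ∀ t ∈ Set.Ioo a b, deriv (fun s => (f₂ s - f₁ s) ^ 2) t = 0 →
      ∀ᶠ s in nhdsWithin t {t}ᶜ, (f₂ t - f₁ t) ^ 2 < (f₂ s - f₁ s) ^ 2 :=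
  stmt7_general d hd a b f₁ f₂ hf₁ hf₂ hpos₁ hpos₂ hder₁ hode₁ hode₂ hdist
end

section
/- Let f be a positive C² solution of the spherically symmetric CMC ODE on (t₀, ∞) with |f'| < 1 that expands indefinitely (f(t) → ∞). Then 1 − f'(t) is integrable on (t₀, ∞), and consequently there exists a constant τ₀ such that |f(t) − (t − τ₀)| → 0 as t → ∞; i.e., the solution is asymptotic to a light cone. -/
/-!
The ODE has the first integral `E = f ^ d / √(1 - f' ^ 2) - f ^ (d + 1)`, so
`√(1 - f' ^ 2) = f ^ d / (f ^ (d + 1) + E) ≤ 2 / f` once `f` is large. Hence `f' ^ 2 → 1`; since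
`f → ∞`, Darboux's theorem rules out `f' → -1`, so eventually `f' ≥ 1 / 2`, `f` grows linearly and
`0 ≤ 1 - f' ≤ 1 - f' ^ 2 = O(t⁻²)` is integrable. Then `t - f t` has integrable derivative `1 - f'`,
so it converges to some `τ₀`.
-/

open Set Filter MeasureTheory Real Asymptotics

noncomputable def cmcFirstIntegral (d : ℕ) (f : ℝ → ℝ) (t : ℝ) : ℝ :=
  f t ^ d / √(1 - deriv f t ^ 2) - f t ^ (d + 1)

theorem hasDerivAt_cmcFirstIntegral {d : ℕ} {f : ℝ → ℝ} {t : ℝ}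
    (hf : DifferentiableAt ℝ f t) (hf' : DifferentiableAt ℝ (deriv f) t) (hft : f t ≠ 0)
    (hder : |deriv f t| < 1)
    (hode : f t * deriv (deriv f) t + d * (1 - deriv f t ^ 2)
      = (d + 1) * f t * (1 - deriv f t ^ 2) ^ ((3 : ℝ) / 2)) :
    HasDerivAt (cmcFirstIntegral d f) 0 t := by
  have hv : 0 < 1 - deriv f t ^ 2 := sub_pos.2 ((sq_lt_one_iff_abs_lt_one _).2 hder)
  set w := √(1 - deriv f t ^ 2) with hw_def
  have hw : 0 < w := sqrt_pos.2 hv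
  have hw2 : w ^ 2 = 1 - deriv f t ^ 2 := sq_sqrt hv.le
  rw [rpow_div_two_eq_sqrt 3 hv.le, show (3 : ℝ) = (3 : ℕ) by norm_num, rpow_natCast,
    ← hw_def] at hode
  -- also for `d = 0`, where `d - 1` truncates
  have hpow : (d : ℝ) * f t ^ (d - 1) * f t = d * f t ^ d := by
    cases d <;> simp [pow_succ, mul_assoc]
  have hnum : d * f t ^ (d - 1) * deriv f t * w ^ 2 + f t ^ d * deriv f t * deriv (deriv f) t
      = (d + 1) * f t ^ d * deriv f t * w ^ 3 := by
    refine mul_left_cancel₀ hft ?_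
    linear_combination (f t ^ d * deriv f t) * hode + (deriv f t * w ^ 2) * hpow
      + (d * f t ^ d * deriv f t) * hw2
  have h := ((hf.hasDerivAt.pow d).div (((hf'.hasDerivAt.pow 2).const_sub 1).sqrt hv.ne')
    hw.ne').sub (hf.hasDerivAt.pow (d + 1))
  refine h.congr_deriv ?_
  simp only [Pi.pow_apply, ← hw_def, Nat.add_sub_cancel]
  field_simp
  push_cast
  linear_combination 2 * hnum

theorem exists_eventually_cmcFirstIntegral_eq {d : ℕ} {f : ℝ → ℝ}
    (hf : ∀ᶠ t in atTop, DifferentiableAt ℝ f t ∧ DifferentiableAt ℝ (deriv f) t)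
    (hne : ∀ᶠ t in atTop, f t ≠ 0) (hder : ∀ᶠ t in atTop, |deriv f t| < 1)
    (hode : ∀ᶠ t in atTop, f t * deriv (deriv f) t + d * (1 - deriv f t ^ 2)
      = (d + 1) * f t * (1 - deriv f t ^ 2) ^ ((3 : ℝ) / 2)) :
    ∃ C, ∀ᶠ t in atTop, cmcFirstIntegral d f t = C := by
  obtain ⟨T, hT⟩ := eventually_atTop.1 (hf.and (hne.and (hder.and hode)))
  have hE : ∀ t ∈ Ioi T, HasDerivAt (cmcFirstIntegral d f) 0 t := fun t ht =>
    have ⟨⟨hft, hf't⟩, hnet, hdert, hodet⟩ := hT t (le_of_lt ht)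
    hasDerivAt_cmcFirstIntegral hft hf't hnet hdert hodet
  obtain ⟨C, hC⟩ := isOpen_Ioi.exists_is_const_of_deriv_eq_zero isPreconnected_Ioi
    (fun t ht => (hE t ht).differentiableAt.differentiableWithinAt) fun t ht => (hE t ht).deriv
  exact ⟨C, mem_of_superset (Ioi_mem_atTop T) hC⟩

theorem mul_le_two_of_pow_div_sub_pow_eq {d : ℕ} {w F C : ℝ} (hw : 0 < w) (hF : 1 ≤ F)
    (hC : 2 * |C| ≤ F) (h : F ^ d / w - F ^ (d + 1) = C) : w * F ≤ 2 := by
  have hFd : 0 < F ^ d := by positivity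
  have hCF : |C| ≤ F ^ (d + 1) / 2 := by linarith [le_self_pow₀ hF (Nat.add_one_ne_zero d)]
  have : w * F ^ (d + 1) / 2 ≤ F ^ d := by
    calc w * F ^ (d + 1) / 2 ≤ w * (F ^ (d + 1) + C) := by
          nlinarith [neg_abs_le C]
      _ = F ^ d := by rw [← h]; field_simp; ring
  rw [pow_succ] at this
  nlinarith

theorem eventually_one_sub_deriv_sq_mul_sq_le_four {d : ℕ} {f : ℝ → ℝ} {C : ℝ}
    (hC : ∀ᶠ t in atTop, cmcFirstIntegral d f t = C) (hder : ∀ᶠ t in atTop, |deriv f t| < 1)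
    (hlim : Tendsto f atTop atTop) :
    ∀ᶠ t in atTop, (1 - deriv f t ^ 2) * f t ^ 2 ≤ 4 := by
  filter_upwards [hC, hder, hlim.eventually_ge_atTop (max 1 (2 * |C|))] with t hCt hdert hft
  have hv : 0 < 1 - deriv f t ^ 2 := sub_pos.2 ((sq_lt_one_iff_abs_lt_one _).2 hdert)
  have hwf := mul_le_two_of_pow_div_sub_pow_eq (sqrt_pos.2 hv) (le_of_max_le_left hft)
    (le_of_max_le_right hft) hCt
  rw [← sq_sqrt hv.le, ← mul_pow]
  nlinarith [mul_nonneg (sqrt_nonneg (1 - deriv f t ^ 2))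
    (zero_le_one.trans (le_of_max_le_left hft))]

theorem eventually_pos_deriv_of_tendsto_atTop {f : ℝ → ℝ}
    (hf : ∀ᶠ t in atTop, DifferentiableAt ℝ f t) (hne : ∀ᶠ t in atTop, deriv f t ≠ 0)
    (hlim : Tendsto f atTop atTop) : ∀ᶠ t in atTop, 0 < deriv f t := by
  obtain ⟨T, hT⟩ := eventually_atTop.1 (hf.and hne)
  have hdiff : DifferentiableOn ℝ f (Ici T) := fun t ht => (hT t ht).1.differentiableWithinAt
  rcases hasDerivWithinAt_forall_lt_or_forall_gt_of_forall_ne (convex_Ici T)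
      (fun t ht => (hT t ht).1.hasDerivAt.hasDerivWithinAt) (fun t ht => (hT t ht).2)
    with hneg | hpos
  · have hanti : AntitoneOn f (Ici T) := antitoneOn_of_deriv_nonpos (convex_Ici T)
      hdiff.continuousOn (hdiff.mono interior_subset) fun t ht => (hneg t (interior_subset ht)).le
    obtain ⟨t, hft, ht⟩ := ((hlim.eventually_gt_atTop (f T)).and (eventually_ge_atTop T)).exists
    exact absurd (hanti self_mem_Ici ht ht) hft.not_ge
  · exact eventually_atTop.2 ⟨T, hpos⟩

theorem eventually_mul_le_of_eventually_le_deriv {f : ℝ → ℝ} {c : ℝ} (hc : 0 < c)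
    (hf : ∀ᶠ t in atTop, DifferentiableAt ℝ f t ∧ c ≤ deriv f t) :
    ∀ᶠ t in atTop, c / 2 * t ≤ f t := by
  obtain ⟨T, hT⟩ := eventually_atTop.1 hf
  have hdiff : DifferentiableOn ℝ f (Ici T) := fun t ht => (hT t ht).1.differentiableWithinAt
  have hgrowth := (convex_Ici T).mul_sub_le_image_sub_of_le_deriv hdiff.continuousOn
    (hdiff.mono interior_subset) fun t ht => (hT t (interior_subset ht)).2
  filter_upwards [eventually_ge_atTop T, eventually_ge_atTop (2 * (T - f T / c))] with t hTt ht
  have := hgrowth T self_mem_Ici t hTt hTt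
  have : c * (2 * (T - f T / c)) = 2 * c * T - 2 * f T := by field_simp
  nlinarith

theorem integrableOn_Ioi_of_abs_le_of_isBigO_rpow {g : ℝ → ℝ} {a M s : ℝ} (hs : s < -1)
    (hg : AEStronglyMeasurable g) (hM : ∀ t ∈ Ioi a, |g t| ≤ M) (hO : g =O[atTop] (· ^ s)) :
    IntegrableOn g (Ioi a) := by
  obtain ⟨u, hu, hint⟩ := hO.integrableAtFilter hg.stronglyMeasurableAtFilter
    (integrableAtFilter_rpow_atTop_iff.2 hs)
  obtain ⟨T, hT⟩ := mem_atTop_sets.1 hu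
  have hbdd : IntegrableOn g (Ioc a T) :=
    Measure.integrableOn_of_bounded (M := M) measure_Ioc_lt_top.ne hg
      ((ae_restrict_iff' measurableSet_Ioc).2 (ae_of_all _ fun t ht => hM t ht.1))
  refine (hbdd.union (hint.mono_set fun t ht => hT t ht)).mono_set fun t ht => ?_
  rcases le_or_gt t T with h | h
  · exact Or.inl ⟨ht, h⟩
  · exact Or.inr (mem_Ici.2 h.le)

theorem integrableOn_one_sub_deriv_of_one_sub_deriv_sq_mul_sq_le {f : ℝ → ℝ} {t₀ K : ℝ}
    (hf : ∀ᶠ t in atTop, DifferentiableAt ℝ f t) (hder : ∀ t ∈ Ioi t₀, |deriv f t| < 1)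
    (hlim : Tendsto f atTop atTop) (hK : ∀ᶠ t in atTop, (1 - deriv f t ^ 2) * f t ^ 2 ≤ K) :
    IntegrableOn (fun t => 1 - deriv f t) (Ioi t₀) := by
  have hsq : ∀ᶠ t in atTop, 1 / 4 ≤ deriv f t ^ 2 := by
    filter_upwards [hK, hlim.eventually_ge_atTop (max 1 (2 * |K|))] with t hKt hft
    nlinarith [le_max_left 1 (2 * |K|), le_max_right 1 (2 * |K|), le_abs_self K]
  have hpos : ∀ᶠ t in atTop, 0 < deriv f t := by
    refine eventually_pos_deriv_of_tendsto_atTop hf ?_ hlim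
    filter_upwards [hsq] with t ht h
    rw [h] at ht
    norm_num at ht
  have hhalf : ∀ᶠ t in atTop, 1 / 2 ≤ deriv f t := by
    filter_upwards [hsq, hpos] with t h1 h2
    nlinarith
  have hlin : ∀ᶠ t in atTop, 1 / 2 / 2 * t ≤ f t :=
    eventually_mul_le_of_eventually_le_deriv (by norm_num) (hf.and hhalf)
  refine integrableOn_Ioi_of_abs_le_of_isBigO_rpow (M := 2) (s := -2) (by norm_num)
    (measurable_const.sub (measurable_deriv f)).aestronglyMeasurable (fun t ht => ?_)
    (IsBigO.of_bound (16 * K) ?_)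
  · have := abs_lt.1 (hder t ht)
    rw [abs_le]
    constructor <;> linarith
  filter_upwards [hK, hhalf, hlin, eventually_gt_atTop 0, eventually_gt_atTop t₀]
    with t hKt hvt hft ht0 htt₀
  have hv1 := (abs_lt.1 (hder t htt₀)).2
  rw [norm_of_nonneg (by linarith), norm_of_nonneg (by positivity), rpow_neg ht0.le,
    show (2 : ℝ) = (2 : ℕ) by norm_num, rpow_natCast, ← div_eq_mul_inv,
    le_div_iff₀ (by positivity)]
  -- `1 - f' ≤ 1 - f' ^ 2 ≤ K / f ^ 2 ≤ 16 K / t ^ 2`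
  nlinarith [mul_nonneg (sub_nonneg.2 hv1.le) (sq_nonneg (f t)),
    mul_le_mul hft hft (by positivity) (by linarith)]

theorem exists_tendsto_abs_sub_sub_of_integrableOn {f f' : ℝ → ℝ} {a : ℝ}
    (hf : ∀ t ∈ Ioi a, HasDerivAt f (f' t) t) (hint : IntegrableOn (fun t => 1 - f' t) (Ioi a)) :
    ∃ τ₀, Tendsto (fun t => |f t - (t - τ₀)|) atTop (nhds 0) := by
  have h := tendsto_limUnder_of_hasDerivAt_of_integrableOn_Ioi (f := fun t => t - f t)
    (fun t ht => (hasDerivAt_id t).sub (hf t ht)) hint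
  refine ⟨limUnder atTop (fun t => t - f t), ?_⟩
  have := (h.sub_const (limUnder atTop (fun t => t - f t))).abs
  rw [sub_self, abs_zero] at this
  refine this.congr fun t => ?_
  rw [abs_sub_comm]
  ring_nf

theorem stmt10_general (d : ℕ) (t₀ : ℝ) (f : ℝ → ℝ)
    (hf : ContDiffOn ℝ 2 f (Set.Ioi t₀))
    (hder : ∀ t ∈ Set.Ioi t₀, |deriv f t| < 1)
    (hode : ∀ t ∈ Set.Ioi t₀,
      f t * deriv (deriv f) t + (d : ℝ) * (1 - (deriv f t) ^ 2)
        = ((d : ℝ) + 1) * f t * (1 - (deriv f t) ^ 2) ^ ((3 : ℝ) / 2))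
    (hlim : Filter.Tendsto f Filter.atTop Filter.atTop) :
    MeasureTheory.IntegrableOn (fun t => 1 - deriv f t) (Set.Ioi t₀) ∧
    ∃ τ₀ : ℝ, Filter.Tendsto (fun t => |f t - (t - τ₀)|) Filter.atTop (nhds 0) := by
  have hdiff : ∀ t ∈ Ioi t₀, DifferentiableAt ℝ f t ∧ DifferentiableAt ℝ (deriv f) t :=
    fun t ht => ⟨(hf.contDiffAt (isOpen_Ioi.mem_nhds ht)).differentiableAt (by norm_num),
      ((hf.deriv_of_isOpen (m := 1) isOpen_Ioi (by norm_num)).contDiffAt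
        (isOpen_Ioi.mem_nhds ht)).differentiableAt (by norm_num)⟩
  have eventually_of_Ioi {p : ℝ → Prop} (hp : ∀ t ∈ Ioi t₀, p t) : ∀ᶠ t in atTop, p t :=
    mem_of_superset (Ioi_mem_atTop t₀) hp
  obtain ⟨C, hC⟩ := exists_eventually_cmcFirstIntegral_eq (eventually_of_Ioi hdiff)
    (hlim.eventually_ne_atTop 0) (eventually_of_Ioi hder) (eventually_of_Ioi hode)
  have hint := integrableOn_one_sub_deriv_of_one_sub_deriv_sq_mul_sq_le
    ((eventually_of_Ioi hdiff).mono fun _ h => h.1) hder hlim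
    (eventually_one_sub_deriv_sq_mul_sq_le_four hC (eventually_of_Ioi hder) hlim)
  exact ⟨hint, exists_tendsto_abs_sub_sub_of_integrableOn
    (fun t ht => (hdiff t ht).1.hasDerivAt) hint⟩

/-- For an indefinitely expanding solution of the spherically symmetric CMC ODE,
`1 − f'` is integrable on `(t₀, ∞)`, and consequently the solution is asymptotic to a
light cone: `|f(t) − (t − τ₀)| → 0` for some constant `τ₀`. -/
theorem stmt10 (d : ℕ) (hd : 1 ≤ d) (t₀ : ℝ) (f : ℝ → ℝ)
    (hf : ContDiffOn ℝ 2 f (Set.Ioi t₀))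
    (hpos : ∀ t ∈ Set.Ioi t₀, 0 < f t)
    (hder : ∀ t ∈ Set.Ioi t₀, |deriv f t| < 1)
    (hode : ∀ t ∈ Set.Ioi t₀,
      f t * deriv (deriv f) t + (d : ℝ) * (1 - (deriv f t) ^ 2)
        = ((d : ℝ) + 1) * f t * (1 - (deriv f t) ^ 2) ^ ((3 : ℝ) / 2))
    (hlim : Filter.Tendsto f Filter.atTop Filter.atTop) :
    MeasureTheory.IntegrableOn (fun t => 1 - deriv f t) (Set.Ioi t₀) ∧
    ∃ τ₀ : ℝ, Filter.Tendsto (fun t => |f t - (t - τ₀)|) Filter.atTop (nhds 0) :=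
  stmt10_general d t₀ f hf hder hode hlim
end
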